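/- Let n ≥ 1 and let x = (x_{ij})_{1 ≤ i,j ≤ n} be real numbers indexed by ordered pairs, with every x_{ij} > 0 and Σ_{i,j} x_{ij} = 1. Then Σ_{(i,j),(k,l)} x_{ij} x_{kl} ‖[Ě_{ij}, Ě_{kl}]‖² < 1, where both sums run over all ordered pairs of indices in {1, …, n}. (Equivalently, the function f(x) = Σ x_{ij} x_{kl} ‖[Ě_{ij}, Ě_{kl}]‖² − (4/3)(Σ x_{ij})² satisfies f(x) < −1/3 on the open simplex.) -/

import Mathlib

open Matrix

/-- Squared Frobenius norm of a complex matrix: `Re tr (A Aᴴ)`. -/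
noncomputable def frobSq {n : ℕ} (A : Matrix (Fin n) (Fin n) ℂ) : ℝ :=
  ((A * Aᴴ).trace).re

/-- Real inner product on complex matrices: `Re tr (A Bᴴ)`. -/
noncomputable def minner {n : ℕ} (A B : Matrix (Fin n) (Fin n) ℂ) : ℝ :=
  ((A * Bᴴ).trace).re

/-- Commutator of matrices. -/
noncomputable def mcomm {n : ℕ} (A B : Matrix (Fin n) (Fin n) ℂ) : Matrix (Fin n) (Fin n) ℂ :=
  A * B - B * A

/-- The standard orthonormal basis `Ě i j` of the real vector space of `n × n`
Hermitian matrices: `Ě i i = E i i`, `Ě i j = (E i j + E j i)/√2` for `i < j`,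
and `Ě i j = 𝐢 (E i j - E j i)/√2` for `i > j`. -/
noncomputable def checkE {n : ℕ} (i j : Fin n) : Matrix (Fin n) (Fin n) ℂ :=
  if i = j then Matrix.single i i 1
  else if i < j then
    ((Real.sqrt 2 : ℂ))⁻¹ • (Matrix.single i j 1 + Matrix.single j i 1)
  else
    (Complex.I / (Real.sqrt 2 : ℂ)) • (Matrix.single i j 1 - Matrix.single j i 1)


namespace DdvvAux
variable {n : ℕ}

def Eb (a b : Fin n) : Matrix (Fin n) (Fin n) ℂ := Matrix.single a b 1

lemma Eb_conjT (a b : Fin n) : (Eb a b)ᴴ = Eb b a := by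
  ext c d
  simp only [Eb, conjTranspose_apply, single, of_apply, and_comm]
  split_ifs <;> simp

lemma Eb_mul_same (a b c : Fin n) : Eb a b * Eb b c = Eb a c := by
  simp [Eb]

lemma Eb_mul_ne {b c : Fin n} (h : b ≠ c) (a d : Fin n) : Eb a b * Eb c d = 0 := by
  simp only [Eb]
  exact Matrix.single_mul_single_of_ne (1:ℂ) a b c h 1

lemma trace_Eb_re (a b : Fin n) : ((Eb a b).trace).re = if a = b then 1 else 0 := by
  rcases eq_or_ne a b with rfl | h
  · simp [Eb, Matrix.trace_single_eq_same]
  · simp [Eb, Matrix.trace_single_eq_of_ne a b (1:ℂ) h, h]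

lemma frobSq_two_offdiag {a b : Fin n} (h : a ≠ b) (c₁ c₂ : ℂ) :
    frobSq (c₁ • Eb a b + c₂ • Eb b a) = Complex.normSq c₁ + Complex.normSq c₂ := by
  unfold frobSq
  rw [conjTranspose_add, conjTranspose_smul, conjTranspose_smul, Eb_conjT, Eb_conjT]
  rw [add_mul, mul_add, mul_add]
  rw [smul_mul_smul_comm, smul_mul_smul_comm, smul_mul_smul_comm, smul_mul_smul_comm]
  rw [Eb_mul_ne h, Eb_mul_ne h.symm, Eb_mul_same, Eb_mul_same]
  simp [trace_smul, trace_Eb_re, Complex.mul_conj, Complex.normSq]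

lemma frobSq_two_diag {a b : Fin n} (h : a ≠ b) (c₁ c₂ : ℂ) :
    frobSq (c₁ • Eb a a + c₂ • Eb b b) = Complex.normSq c₁ + Complex.normSq c₂ := by
  unfold frobSq
  rw [conjTranspose_add, conjTranspose_smul, conjTranspose_smul, Eb_conjT, Eb_conjT]
  rw [add_mul, mul_add, mul_add]
  rw [smul_mul_smul_comm, smul_mul_smul_comm, smul_mul_smul_comm, smul_mul_smul_comm]
  rw [Eb_mul_ne h, Eb_mul_ne h.symm, Eb_mul_same, Eb_mul_same]
  simp [trace_smul, trace_Eb_re, Complex.mul_conj, Complex.normSq, h]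

lemma frobSq_zero : frobSq (0 : Matrix (Fin n) (Fin n) ℂ) = 0 := by
  simp [frobSq]

lemma frobSq_smul (z : ℂ) (M : Matrix (Fin n) (Fin n) ℂ) :
    frobSq (z • M) = Complex.normSq z * frobSq M := by
  unfold frobSq
  rw [conjTranspose_smul, smul_mul_smul_comm, trace_smul]
  rw [smul_eq_mul, show star z = (starRingEnd ℂ) z from rfl, Complex.mul_conj, Complex.mul_re]
  simp

lemma mcomm_self (A : Matrix (Fin n) (Fin n) ℂ) : mcomm A A = 0 := by
  simp [mcomm]

lemma mcomm_anti (A B : Matrix (Fin n) (Fin n) ℂ) : mcomm B A = -mcomm A B := by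
  simp [mcomm]

lemma frobSq_neg (M : Matrix (Fin n) (Fin n) ℂ) : frobSq (-M) = frobSq M := by
  simp [frobSq]

lemma frobSq_mcomm_symm (A B : Matrix (Fin n) (Fin n) ℂ) :
    frobSq (mcomm A B) = frobSq (mcomm B A) := by
  rw [mcomm_anti, frobSq_neg]

lemma mcomm_smul_smul (c d : ℂ) (A B : Matrix (Fin n) (Fin n) ℂ) :
    mcomm (c • A) (d • B) = (c * d) • mcomm A B := by
  simp only [mcomm, smul_mul_smul_comm, smul_sub, mul_comm]

lemma mcomm_smul_right (c : ℂ) (A B : Matrix (Fin n) (Fin n) ℂ) :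
    mcomm A (c • B) = c • mcomm A B := by
  simp only [mcomm, mul_smul_comm, smul_mul_assoc, smul_sub]

/-- commutator of off-diagonal pairs sharing the middle index. -/
lemma mcomm_PP_share {a b d : Fin n} (hab : a ≠ b) (hbd : b ≠ d) (had : a ≠ d) (ε δ : ℂ) :
    mcomm (Eb a b + ε • Eb b a) (Eb b d + δ • Eb d b)
      = (1:ℂ) • Eb a d + (-(δ * ε)) • Eb d a := by
  simp only [mcomm, add_mul, mul_add, smul_mul_assoc, mul_smul_comm,
    Eb_mul_same, Eb_mul_ne hbd, Eb_mul_ne hab.symm, Eb_mul_ne had.symm,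
    Eb_mul_ne had, Eb_mul_ne hbd.symm, Eb_mul_ne hab, smul_smul]
  module

lemma mcomm_PP_same {a b : Fin n} (hab : a ≠ b) (ε δ : ℂ) :
    mcomm (Eb a b + ε • Eb b a) (Eb a b + δ • Eb b a)
      = (δ - ε) • Eb a a + (ε - δ) • Eb b b := by
  simp only [mcomm, add_mul, mul_add, smul_mul_assoc, mul_smul_comm,
    Eb_mul_same, Eb_mul_ne hab, Eb_mul_ne hab.symm, smul_smul]
  module

lemma mcomm_D_off {a b : Fin n} (hab : a ≠ b) (ε : ℂ) :
    mcomm (Eb a a) (Eb a b + ε • Eb b a) = (1:ℂ) • Eb a b + (-ε) • Eb b a := by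
  simp only [mcomm, mul_add, add_mul, mul_smul_comm, smul_mul_assoc,
    Eb_mul_same, Eb_mul_ne hab, Eb_mul_ne hab.symm]
  module

lemma mcomm_off_disjoint {a b c d : Fin n} (hac : a ≠ c) (had : a ≠ d) (hbc : b ≠ c)
    (hbd : b ≠ d) (ε δ : ℂ) :
    mcomm (Eb a b + ε • Eb b a) (Eb c d + δ • Eb d c) = 0 := by
  simp only [mcomm, add_mul, mul_add, smul_mul_assoc, mul_smul_comm,
    Eb_mul_ne hbc, Eb_mul_ne hbd, Eb_mul_ne hac, Eb_mul_ne had,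
    Eb_mul_ne hac.symm, Eb_mul_ne hbc.symm, Eb_mul_ne had.symm, Eb_mul_ne hbd.symm]
  simp

lemma mcomm_D_off_disjoint {k a b : Fin n} (hka : k ≠ a) (hkb : k ≠ b) (ε : ℂ) :
    mcomm (Eb k k) (Eb a b + ε • Eb b a) = 0 := by
  simp only [mcomm, mul_add, add_mul, mul_smul_comm, smul_mul_assoc,
    Eb_mul_ne hka, Eb_mul_ne hkb, Eb_mul_ne hka.symm, Eb_mul_ne hkb.symm]
  simp

lemma mcomm_D_D (a c : Fin n) : mcomm (Eb a a) (Eb c c) = 0 := by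
  rcases eq_or_ne a c with rfl | h
  · exact mcomm_self _
  · simp [mcomm, Eb_mul_ne h, Eb_mul_ne h.symm]

lemma checkE_diag (i : Fin n) : checkE i i = Eb i i := by
  simp [checkE, Eb]

lemma normSq_invsqrt2 : Complex.normSq (((Real.sqrt 2 : ℝ) : ℂ))⁻¹ = 1/2 := by
  rw [map_inv₀, Complex.normSq_ofReal]
  rw [Real.mul_self_sqrt (by norm_num)]
  norm_num

lemma normSq_Idivsqrt2 : Complex.normSq (Complex.I / ((Real.sqrt 2 : ℝ) : ℂ)) = 1/2 := by
  rw [map_div₀, Complex.normSq_I, Complex.normSq_ofReal]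
  rw [Real.mul_self_sqrt (by norm_num)]

lemma checkE_off_rep {i j a b : Fin n} (hij : i ≠ j) (hab : (a,b) = (i,j) ∨ (a,b) = (j,i)) :
    ∃ c ε : ℂ, checkE i j = c • (Eb a b + ε • Eb b a)
      ∧ Complex.normSq c = 1/2 ∧ Complex.normSq ε = 1 := by
  rcases lt_or_gt_of_ne hij with hlt | hgt
  · have hE : checkE i j = ((Real.sqrt 2 : ℂ))⁻¹ • (Eb i j + Eb j i) := by
      simp [checkE, hij, hlt, Eb]
    rcases hab with h | h
    · obtain ⟨rfl, rfl⟩ : a = i ∧ b = j := by simpa [Prod.ext_iff] using h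
      exact ⟨_, 1, by simpa using hE, normSq_invsqrt2, by simp⟩
    · obtain ⟨rfl, rfl⟩ : a = j ∧ b = i := by simpa [Prod.ext_iff] using h
      exact ⟨_, 1, by rw [hE]; simp [add_comm], normSq_invsqrt2, by simp⟩
  · have hnlt : ¬ i < j := not_lt_of_gt hgt
    have hE : checkE i j = (Complex.I / (Real.sqrt 2 : ℂ)) • (Eb i j - Eb j i) := by
      simp [checkE, hij, hnlt, Eb]
    rcases hab with h | h
    · obtain ⟨rfl, rfl⟩ : a = i ∧ b = j := by simpa [Prod.ext_iff] using h
      refine ⟨Complex.I / (Real.sqrt 2 : ℂ), -1, ?_, normSq_Idivsqrt2, by simp⟩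
      rw [hE]; simp [sub_eq_add_neg]
    · obtain ⟨rfl, rfl⟩ : a = j ∧ b = i := by simpa [Prod.ext_iff] using h
      refine ⟨-(Complex.I / (Real.sqrt 2 : ℂ)), -1, ?_, by rw [Complex.normSq_neg]; exact normSq_Idivsqrt2, by simp⟩
      rw [hE]
      module

/-- The key bound on the commutator norms. -/
lemma C_bound (i j k l : Fin n) :
    frobSq (mcomm (checkE i j) (checkE k l)) ≤
      (if (k,l) = (i,j) then (0:ℝ) else if (k,l) = (j,i) then 2 else 1) := by
  by_cases heq : (k,l) = (i,j)
  · obtain ⟨rfl, rfl⟩ : k = i ∧ l = j := by simpa [Prod.ext_iff] using heq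
    simp [heq, mcomm_self, frobSq_zero]
  rw [if_neg heq]
  -- helper to compute frobSq for the shared-index off-diagonal case
  have share : ∀ (a b d : Fin n), a ≠ b → b ≠ d → a ≠ d →
      ∀ (c c' ε δ : ℂ), Complex.normSq c = 1/2 → Complex.normSq c' = 1/2 →
      Complex.normSq ε = 1 → Complex.normSq δ = 1 →
      frobSq (mcomm (c • (Eb a b + ε • Eb b a)) (c' • (Eb b d + δ • Eb d b))) = 1/2 := by
    intro a b d hab hbd had c c' ε δ hc hc' hε hδ
    rw [mcomm_smul_smul, frobSq_smul, mcomm_PP_share hab hbd had,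
      frobSq_two_offdiag had]
    rw [Complex.normSq_mul, hc, hc']
    simp [Complex.normSq_mul, hε, hδ, Complex.normSq_neg]
    norm_num
  rcases eq_or_ne i j with rfl | hij
  · rcases eq_or_ne k l with rfl | hkl
    · rw [if_neg heq]
      rw [checkE_diag, checkE_diag, mcomm_D_D, frobSq_zero]
      norm_num
    · rw [if_neg (by
        intro h
        obtain ⟨rfl, rfl⟩ : k = i ∧ l = i := by simpa [Prod.ext_iff] using h
        exact hkl rfl)]
      rcases eq_or_ne i k with rfl | hik
      · obtain ⟨c, ε, hrep, hc, hε⟩ := checkE_off_rep hkl (Or.inl rfl)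
        rw [checkE_diag, hrep, mcomm_smul_right, frobSq_smul, mcomm_D_off hkl,
          frobSq_two_offdiag hkl, hc]
        simp [Complex.normSq_neg, hε]
        norm_num
      · rcases eq_or_ne i l with rfl | hil
        · obtain ⟨c, ε, hrep, hc, hε⟩ := checkE_off_rep hkl (Or.inr rfl)
          rw [checkE_diag, hrep, mcomm_smul_right, frobSq_smul, mcomm_D_off hkl.symm,
            frobSq_two_offdiag hkl.symm, hc]
          simp [Complex.normSq_neg, hε]
          norm_num
        · obtain ⟨c, ε, hrep, hc, hε⟩ := checkE_off_rep hkl (Or.inl rfl)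
          rw [checkE_diag, hrep, mcomm_smul_right, frobSq_smul,
            mcomm_D_off_disjoint hik hil, frobSq_zero]
          norm_num
  · rcases eq_or_ne k l with rfl | hkl
    · rw [if_neg (by
        intro h
        obtain ⟨h1, h2⟩ : k = j ∧ k = i := by simpa [Prod.ext_iff] using h
        exact hij (h2.symm.trans h1))]
      rw [frobSq_mcomm_symm]
      rcases eq_or_ne k i with rfl | hki
      · obtain ⟨c, ε, hrep, hc, hε⟩ := checkE_off_rep hij (Or.inl rfl)
        rw [checkE_diag, hrep, mcomm_smul_right, frobSq_smul, mcomm_D_off hij,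
          frobSq_two_offdiag hij, hc]
        simp [Complex.normSq_neg, hε]
        norm_num
      · rcases eq_or_ne k j with rfl | hkj
        · obtain ⟨c, ε, hrep, hc, hε⟩ := checkE_off_rep hij (Or.inr rfl)
          rw [checkE_diag, hrep, mcomm_smul_right, frobSq_smul, mcomm_D_off hij.symm,
            frobSq_two_offdiag hij.symm, hc]
          simp [Complex.normSq_neg, hε]
          norm_num
        · obtain ⟨c, ε, hrep, hc, hε⟩ := checkE_off_rep hij (Or.inl rfl)
          rw [checkE_diag, hrep, mcomm_smul_right, frobSq_smul,
            mcomm_D_off_disjoint hki hkj, frobSq_zero]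
          norm_num
    · by_cases hswap : (k,l) = (j,i)
      · rw [if_pos hswap]
        obtain ⟨rfl, rfl⟩ : k = j ∧ l = i := by simpa [Prod.ext_iff] using hswap
        obtain ⟨c, ε, hrep, hc, hε⟩ := checkE_off_rep hij (Or.inl rfl)
        obtain ⟨c', ε', hrep', hc', hε'⟩ := checkE_off_rep hij.symm (Or.inr rfl)
        rw [hrep, hrep', mcomm_smul_smul, frobSq_smul, mcomm_PP_same hij,
          frobSq_two_diag hij, Complex.normSq_mul, hc, hc']
        have habs : ∀ z : ℂ, Complex.normSq z = 1 → ‖z‖ = 1 := by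
          intro z hz
          have h2 : ‖z‖ ^ 2 = 1 := by rw [Complex.sq_norm]; exact hz
          nlinarith [norm_nonneg z]
        have h1 : Complex.normSq (ε' - ε) ≤ 4 := by
          rw [Complex.normSq_eq_norm_sq]
          have h := norm_sub_le ε' ε
          nlinarith [norm_nonneg (ε' - ε), habs ε hε, habs ε' hε']
        have h2 : Complex.normSq (ε - ε') ≤ 4 := by
          rw [show ε - ε' = -(ε' - ε) by ring, Complex.normSq_neg]; exact h1
        nlinarith
      · rw [if_neg hswap]
        rcases eq_or_ne j k with rfl | hjk
        · -- shared index j = k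
          have hil : i ≠ l := by
            rintro rfl; exact hswap rfl
          obtain ⟨c, ε, hrep, hc, hε⟩ := checkE_off_rep hij (Or.inl rfl)
          obtain ⟨c', ε', hrep', hc', hε'⟩ := checkE_off_rep hkl (Or.inl rfl)
          rw [hrep, hrep', share i j l hij hkl hil c c' ε ε' hc hc' hε hε']
          norm_num
        · rcases eq_or_ne j l with rfl | hjl
          · have hik : i ≠ k := by
              rintro rfl; exact heq rfl
            obtain ⟨c, ε, hrep, hc, hε⟩ := checkE_off_rep hij (Or.inl rfl)
            obtain ⟨c', ε', hrep', hc', hε'⟩ := checkE_off_rep hkl (Or.inr rfl)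
            rw [hrep, hrep', share i j k hij hkl.symm hik c c' ε ε' hc hc' hε hε']
            norm_num
          · rcases eq_or_ne i k with rfl | hik
            · have hjl2 : j ≠ l := hjl
              obtain ⟨c, ε, hrep, hc, hε⟩ := checkE_off_rep hij (Or.inr rfl)
              obtain ⟨c', ε', hrep', hc', hε'⟩ := checkE_off_rep hkl (Or.inl rfl)
              rw [hrep, hrep', share j i l hij.symm hkl hjl2 c c' ε ε' hc hc' hε hε']
              norm_num
            · rcases eq_or_ne i l with rfl | hil
              · have hjk2 : j ≠ k := hjk
                obtain ⟨c, ε, hrep, hc, hε⟩ := checkE_off_rep hij (Or.inr rfl)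
                obtain ⟨c', ε', hrep', hc', hε'⟩ := checkE_off_rep hkl (Or.inr rfl)
                rw [hrep, hrep', share j i k hij.symm hkl.symm hjk2 c c' ε ε' hc hc' hε hε']
                norm_num
              · obtain ⟨c, ε, hrep, hc, hε⟩ := checkE_off_rep hij (Or.inl rfl)
                obtain ⟨c', ε', hrep', hc', hε'⟩ := checkE_off_rep hkl (Or.inl rfl)
                rw [hrep, hrep', mcomm_smul_smul, frobSq_smul,
                  mcomm_off_disjoint hik hil hjk hjl, frobSq_zero]
                norm_num

end DdvvAux

theorem ddvv_quadratic_form_identity_strict (n : ℕ) (hn : 1 ≤ n)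
    (x : Fin n → Fin n → ℝ) (hx : ∀ i j, 0 < x i j)
    (hsum : ∑ i : Fin n, ∑ j : Fin n, x i j = 1) :
    ∑ i : Fin n, ∑ j : Fin n, ∑ k : Fin n, ∑ l : Fin n,
        x i j * x k l * frobSq (mcomm (checkE i j) (checkE k l)) < 1 := by
  classical
  have step1 : (∑ i : Fin n, ∑ j : Fin n, ∑ k : Fin n, ∑ l : Fin n,
        x i j * x k l * frobSq (mcomm (checkE i j) (checkE k l)))
      ≤ ∑ i : Fin n, ∑ j : Fin n, ∑ k : Fin n, ∑ l : Fin n, x i j * x k l *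
        (if (k,l) = (i,j) then (0:ℝ) else if (k,l) = (j,i) then 2 else 1) := by
    refine Finset.sum_le_sum fun i _ => Finset.sum_le_sum fun j _ =>
      Finset.sum_le_sum fun k _ => Finset.sum_le_sum fun l _ => ?_
    exact mul_le_mul_of_nonneg_left (DdvvAux.C_bound i j k l)
      (mul_pos (hx i j) (hx k l)).le
  have hg : ∀ i j k l : Fin n,
      (if (k,l) = (i,j) then (0:ℝ) else if (k,l) = (j,i) then 2 else 1)
      = 1 - (if (k,l) = (i,j) then (1:ℝ) else 0)
        + (if ((k,l) = (j,i) ∧ ¬ (k,l) = (i,j)) then (1:ℝ) else 0) := by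
    intro i j k l
    by_cases h1 : (k,l) = (i,j)
    · rw [if_pos h1, if_pos h1, if_neg (by tauto)]
      norm_num
    · by_cases h2 : (k,l) = (j,i)
      · rw [if_neg h1, if_pos h2, if_neg h1, if_pos ⟨h2, h1⟩]; norm_num
      · rw [if_neg h1, if_neg h2, if_neg h1, if_neg (by tauto)]; norm_num
  have hA : ∀ i j : Fin n, (∑ k : Fin n, ∑ l : Fin n, x i j * x k l) = x i j := by
    intro i j
    simp only [← Finset.mul_sum]
    rw [hsum, mul_one]
  have hB : ∀ i j : Fin n, (∑ k : Fin n, ∑ l : Fin n,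
      x i j * x k l * (if (k,l) = (i,j) then (1:ℝ) else 0)) = x i j * x i j := by
    intro i j
    simp [Prod.mk.injEq, mul_ite, mul_one, mul_zero, ite_and, Finset.sum_ite_irrel,
      Finset.sum_const_zero, Finset.sum_ite_eq, Finset.sum_ite_eq']
  have hC : ∀ i j : Fin n, (∑ k : Fin n, ∑ l : Fin n,
      x i j * x k l * (if ((k,l) = (j,i) ∧ ¬ (k,l) = (i,j)) then (1:ℝ) else 0))
      = if i = j then 0 else x i j * x j i := by
    intro i j
    rcases eq_or_ne i j with rfl | hij
    · rw [if_pos rfl]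
      refine Finset.sum_eq_zero fun k _ => Finset.sum_eq_zero fun l _ => ?_
      rw [if_neg (by tauto), mul_zero]
    · have hcond : ∀ k l : Fin n, ((k,l) = (j,i) ∧ ¬ (k,l) = (i,j)) ↔ (k,l) = (j,i) := by
        intro k l
        constructor
        · exact And.left
        · intro h
          refine ⟨h, fun h2 => hij ?_⟩
          rw [h] at h2
          exact (by simpa [Prod.ext_iff] using h2 : j = i ∧ i = j).2
      simp only [hcond]
      rw [if_neg hij]
      simp [Prod.mk.injEq, mul_ite, mul_one, mul_zero, ite_and, Finset.sum_ite_irrel,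
        Finset.sum_const_zero, Finset.sum_ite_eq, Finset.sum_ite_eq']
  have hrow : ∀ i j : Fin n, (∑ k : Fin n, ∑ l : Fin n, x i j * x k l *
      (if (k,l) = (i,j) then (0:ℝ) else if (k,l) = (j,i) then 2 else 1))
      = x i j - x i j * x i j + (if i = j then 0 else x i j * x j i) := by
    intro i j
    have e1 : ∀ k l : Fin n, x i j * x k l *
        (if (k,l) = (i,j) then (0:ℝ) else if (k,l) = (j,i) then 2 else 1)
        = x i j * x k l - x i j * x k l * (if (k,l) = (i,j) then (1:ℝ) else 0)
          + x i j * x k l * (if ((k,l) = (j,i) ∧ ¬ (k,l) = (i,j)) then (1:ℝ) else 0) := by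
      intro k l
      rw [hg]
      ring
    simp only [e1]
    rw [show (∑ k : Fin n, ∑ l : Fin n, (x i j * x k l
        - x i j * x k l * (if (k,l) = (i,j) then (1:ℝ) else 0)
        + x i j * x k l * (if ((k,l) = (j,i) ∧ ¬ (k,l) = (i,j)) then (1:ℝ) else 0)))
      = (∑ k : Fin n, ∑ l : Fin n, x i j * x k l)
        - (∑ k : Fin n, ∑ l : Fin n, x i j * x k l * (if (k,l) = (i,j) then (1:ℝ) else 0))
        + (∑ k : Fin n, ∑ l : Fin n, x i j * x k l *
            (if ((k,l) = (j,i) ∧ ¬ (k,l) = (i,j)) then (1:ℝ) else 0)) by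
      simp [Finset.sum_add_distrib, Finset.sum_sub_distrib]]
    rw [hA, hB, hC]
  have step2 : (∑ i : Fin n, ∑ j : Fin n, ∑ k : Fin n, ∑ l : Fin n, x i j * x k l *
      (if (k,l) = (i,j) then (0:ℝ) else if (k,l) = (j,i) then 2 else 1))
      = 1 - (∑ i : Fin n, ∑ j : Fin n, x i j * x i j)
        + (∑ i : Fin n, ∑ j : Fin n, (if i = j then (0:ℝ) else x i j * x j i)) := by
    simp only [hrow]
    rw [show (∑ i : Fin n, ∑ j : Fin n, (x i j - x i j * x i j
        + (if i = j then (0:ℝ) else x i j * x j i)))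
      = (∑ i : Fin n, ∑ j : Fin n, x i j) - (∑ i : Fin n, ∑ j : Fin n, x i j * x i j)
        + (∑ i : Fin n, ∑ j : Fin n, (if i = j then (0:ℝ) else x i j * x j i)) by
      simp [Finset.sum_add_distrib, Finset.sum_sub_distrib]]
    rw [hsum]
  -- Now the strict inequality 1 - S1 + S2 < 1, i.e. S2 < S1.
  have hOff : (∑ i : Fin n, ∑ j : Fin n, (if i = j then (0:ℝ) else x j i * x j i))
      = ∑ i : Fin n, ∑ j : Fin n, (if i = j then (0:ℝ) else x i j * x i j) := by
    rw [Finset.sum_comm]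
    congr 1
    ext i
    congr 1
    ext j
    simp [eq_comm]
  have hS2le : (∑ i : Fin n, ∑ j : Fin n, (if i = j then (0:ℝ) else x i j * x j i))
      ≤ ∑ i : Fin n, ∑ j : Fin n, (if i = j then (0:ℝ) else x i j * x i j) := by
    have htw : ∀ i j : Fin n, (if i = j then (0:ℝ) else x i j * x j i)
        ≤ (((if i = j then (0:ℝ) else x i j * x i j)
            + (if i = j then (0:ℝ) else x j i * x j i)) / 2) := by
      intro i j
      split
      · norm_num
      · nlinarith [sq_nonneg (x i j - x j i)]
    calc (∑ i : Fin n, ∑ j : Fin n, (if i = j then (0:ℝ) else x i j * x j i))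
        ≤ ∑ i : Fin n, ∑ j : Fin n,
          (((if i = j then (0:ℝ) else x i j * x i j)
            + (if i = j then (0:ℝ) else x j i * x j i)) / 2) :=
          Finset.sum_le_sum fun i _ => Finset.sum_le_sum fun j _ => htw i j
      _ = ((∑ i : Fin n, ∑ j : Fin n, (if i = j then (0:ℝ) else x i j * x i j))
            + (∑ i : Fin n, ∑ j : Fin n, (if i = j then (0:ℝ) else x j i * x j i))) / 2 := by
          simp [Finset.sum_add_distrib, ← Finset.sum_div]
      _ = ∑ i : Fin n, ∑ j : Fin n, (if i = j then (0:ℝ) else x i j * x i j) := by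
          rw [hOff]
          ring
  have hS1split : (∑ i : Fin n, ∑ j : Fin n, x i j * x i j)
      = (∑ i : Fin n, x i i * x i i)
        + ∑ i : Fin n, ∑ j : Fin n, (if i = j then (0:ℝ) else x i j * x i j) := by
    have htw : ∀ i j : Fin n, x i j * x i j
        = (if i = j then x i j * x i j else 0) + (if i = j then (0:ℝ) else x i j * x i j) := by
      intro i j
      split <;> ring
    calc (∑ i : Fin n, ∑ j : Fin n, x i j * x i j)
        = (∑ i : Fin n, ∑ j : Fin n, (if i = j then x i j * x i j else 0))
          + ∑ i : Fin n, ∑ j : Fin n, (if i = j then (0:ℝ) else x i j * x i j) := by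
          rw [← Finset.sum_add_distrib]
          refine Finset.sum_congr rfl fun i _ => ?_
          rw [← Finset.sum_add_distrib]
          exact Finset.sum_congr rfl fun j _ => htw i j
      _ = (∑ i : Fin n, x i i * x i i)
          + ∑ i : Fin n, ∑ j : Fin n, (if i = j then (0:ℝ) else x i j * x i j) := by
          congr 1
          congr 1
          ext i
          simp
  have hpos : 0 < ∑ i : Fin n, x i i * x i i := by
    have : Nonempty (Fin n) := ⟨⟨0, hn⟩⟩
    exact Finset.sum_pos (fun i _ => mul_pos (hx i i) (hx i i)) Finset.univ_nonempty
  calc (∑ i : Fin n, ∑ j : Fin n, ∑ k : Fin n, ∑ l : Fin n,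
        x i j * x k l * frobSq (mcomm (checkE i j) (checkE k l)))
      ≤ ∑ i : Fin n, ∑ j : Fin n, ∑ k : Fin n, ∑ l : Fin n, x i j * x k l *
        (if (k,l) = (i,j) then (0:ℝ) else if (k,l) = (j,i) then 2 else 1) := step1
    _ = 1 - (∑ i : Fin n, ∑ j : Fin n, x i j * x i j)
        + (∑ i : Fin n, ∑ j : Fin n, (if i = j then (0:ℝ) else x i j * x j i)) := step2
    _ < 1 := by linarith
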